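/- arXiv:2303.16385 — 4 statements merged into one kernel-verified Lean document; each statement's English description precedes it below -/
import Mathlib

section
/- Let $\{W_k\}_{k \ge 0}$ be a sequence of $m \times m$ row-stochastic matrices. Then there exists a sequence $\{\pi_k\}_{k\ge0}$ of stochastic vectors (nonnegative entries summing to 1) such that $\pi_{k+1}^{\mathsf{T}} W_k = \pi_k^{\mathsf{T}}$ for all $k \ge 0$. -/
/-!
The set of sequences in a compact set `K` satisfying the first `n` relations
`f k (x (k + 1)) = x k` is closed in the compact space `K^ℕ`, and nonempty: start anywhere at
time `n` and pull back. These sets decrease in `n`, so their intersection is nonempty. For the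
theorem, `K` is the standard simplex and `f k` is `π ↦ πᵀ W k`.
-/

open Matrix

section BackwardOrbit

variable {X : Type*} {K : Set X} {f : ℕ → X → X}

theorem exists_finite_backward_orbit (hfK : ∀ k, Set.MapsTo (f k) K K) (n : ℕ) {y : X}
    (hy : y ∈ K) :
    ∃ x : ℕ → X, (∀ k, x k ∈ K) ∧ x n = y ∧ ∀ k < n, f k (x (k + 1)) = x k := by
  induction n generalizing y with
  | zero => exact ⟨fun _ => y, fun _ => hy, rfl, fun k hk => absurd hk k.not_lt_zero⟩
  | succ n ih =>
    obtain ⟨x, hxK, hxn, hx⟩ := ih (hfK n hy)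
    refine ⟨Function.update x (n + 1) y, fun k => ?_, Function.update_self _ _ _,
      fun k hk => ?_⟩
    · rcases eq_or_ne k (n + 1) with rfl | hk
      · simpa using hy
      · simpa [hk] using hxK k
    · rcases (Nat.lt_succ_iff.mp hk).lt_or_eq with hk | rfl
      · rw [Function.update_of_ne (by omega), Function.update_of_ne (by omega)]
        exact hx k hk
      · simp [hxn]

variable [TopologicalSpace X] [T2Space X]

theorem exists_backward_orbit (hK : IsCompact K) (hKne : K.Nonempty)
    (hf : ∀ k, Continuous (f k)) (hfK : ∀ k, Set.MapsTo (f k) K K) :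
    ∃ x : ℕ → X, (∀ k, x k ∈ K) ∧ ∀ k, f k (x (k + 1)) = x k := by
  let S : ℕ → Set (ℕ → X) := fun n =>
    Set.univ.pi (fun _ => K) ∩ ⋂ k ∈ Finset.range n, {x | f k (x (k + 1)) = x k}
  have hS_closed : ∀ n, IsClosed (S n) := fun n =>
    (isClosed_set_pi fun _ _ => hK.isClosed).inter <| isClosed_biInter fun k _ =>
      isClosed_eq ((hf k).comp (continuous_apply _)) (continuous_apply k)
  have hS_ne : ∀ n, (S n).Nonempty := fun n => by
    obtain ⟨y, hy⟩ := hKne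
    obtain ⟨x, hxK, -, hx⟩ := exists_finite_backward_orbit hfK n hy
    exact ⟨x, fun k _ => hxK k, by simpa using hx⟩
  have hS_anti : ∀ n, S (n + 1) ⊆ S n := fun n =>
    Set.inter_subset_inter_right _ <| Set.biInter_subset_biInter_left <| by simp
  have hS_compact : IsCompact (S 0) :=
    (isCompact_univ_pi fun _ => hK).of_isClosed_subset (hS_closed 0) Set.inter_subset_left
  obtain ⟨x, hx⟩ := IsCompact.nonempty_iInter_of_sequence_nonempty_isCompact_isClosed S hS_anti
    hS_ne hS_compact hS_closed
  simp only [Set.mem_iInter] at hx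
  exact ⟨x, fun k => (hx 0).1 k trivial,
    fun k => Set.mem_iInter₂.mp (hx (k + 1)).2 k (by simp)⟩

end BackwardOrbit

theorem vecMul_mem_stdSimplex {R n : Type*} [Fintype n] [DecidableEq n] [CommSemiring R]
    [PartialOrder R] [IsOrderedRing R] {M : Matrix n n R} (hM : M ∈ rowStochastic R n)
    {x : n → R} (hx : x ∈ stdSimplex R n) : x ᵥ* M ∈ stdSimplex R n := by
  refine ⟨nonneg_vecMul_of_mem_rowStochastic hM hx.1, ?_⟩
  have hx1 : x ⬝ᵥ 1 = 1 := by rw [dotProduct_one]; exact hx.2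
  simpa only [dotProduct_one] using vecMul_dotProduct_one_eq_one_rowStochastic hM hx1

theorem stmt_6 (m : ℕ) (hm : 0 < m) (W : ℕ → Matrix (Fin m) (Fin m) ℝ)
    (hWnn : ∀ k i j, 0 ≤ W k i j) (hWrow : ∀ k i, ∑ j, W k i j = 1) :
    ∃ π : ℕ → Fin m → ℝ,
      (∀ k, (∀ i, 0 ≤ π k i) ∧ ∑ i, π k i = 1)
      ∧ ∀ k j, ∑ i, π (k + 1) i * W k i j = π k j := by
  have hW : ∀ k, W k ∈ rowStochastic ℝ (Fin m) := fun k =>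
    mem_rowStochastic_iff_sum.mpr ⟨hWnn k, hWrow k⟩
  obtain ⟨π, hπ, hπW⟩ := exists_backward_orbit (isCompact_stdSimplex ℝ (Fin m))
    ⟨_, single_mem_stdSimplex ℝ (⟨0, hm⟩ : Fin m)⟩
    (fun _ => continuous_id.matrix_vecMul continuous_const)
    (fun k _ hx => vecMul_mem_stdSimplex (hW k) hx)
  exact ⟨π, hπ, fun k j => congrFun (hπW k) j⟩
end

section
/- Let $\{W_k\}$ be a sequence of $m \times m$ row-stochastic matrices, each of whose associated directed graph (edge $(j,i)$ whenever $[W_k]_{ij} > 0$) is strongly connected and has self-loops at every node, and suppose every positive entry of each $W_k$ is at least $w > 0$. If $\{\pi_k\}$ is a sequence of stochastic vectors satisfying $\pi_{k+1}^{\mathsf{T}} W_k = \pi_k^{\mathsf{T}}$ for all $k \ge 0$, then $[\pi_k]_i \ge w^m/m$ for all $i$ and all $k \ge 0$. -/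
open Classical in
noncomputable def reachSet {m : ℕ} (W : ℕ → Matrix (Fin m) (Fin m) ℝ) (k : ℕ) (j : Fin m) :
    ℕ → Finset (Fin m)
  | 0 => {j}
  | t + 1 => Finset.univ.filter (fun i => ∃ i' ∈ reachSet W k j t, 0 < W (k + t) i i')

lemma cross_lemma {α : Type*} {r : α → α → Prop} {S : Set α} {x y : α}
    (h : Relation.ReflTransGen r x y) (hx : x ∈ S) (hy : y ∉ S) :
    ∃ a ∈ S, ∃ b, b ∉ S ∧ r a b := by
  induction h with
  | refl => exact absurd hx hy
  | @tail b c h' hr ih =>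
    by_cases hb : b ∈ S
    · exact ⟨b, hb, c, hy, hr⟩
    · exact ih hb

theorem stmt_7 (m : ℕ) (hm : 0 < m) (w : ℝ) (hw : 0 < w)
    (W : ℕ → Matrix (Fin m) (Fin m) ℝ)
    (hWnn : ∀ k i j, 0 ≤ W k i j) (hWrow : ∀ k i, ∑ j, W k i j = 1)
    -- self-loops at every node:
    (hself : ∀ k i, 0 < W k i i)
    -- every positive entry is at least w:
    (hwbound : ∀ k i j, 0 < W k i j → w ≤ W k i j)
    -- the graph of each W k (edge from j to i when W k i j > 0) is strongly connected:
    (hconn : ∀ k i j, Relation.ReflTransGen (fun a b : Fin m => 0 < W k b a) i j)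
    (π : ℕ → Fin m → ℝ)
    (hπnn : ∀ k i, 0 ≤ π k i) (hπsum : ∀ k, ∑ i, π k i = 1)
    (hbal : ∀ k j, ∑ i, π (k + 1) i * W k i j = π k j) :
    ∀ k i, w ^ m / m ≤ π k i := by
  intro k j
  have hmemsucc : ∀ t i i', i' ∈ reachSet W k j t → 0 < W (k + t) i i' →
      i ∈ reachSet W k j (t + 1) := by
    intro t i i' h1 h2
    simp only [reachSet, Finset.mem_filter, Finset.mem_univ, true_and]
    exact ⟨i', h1, h2⟩
  have hmono : ∀ t i, i ∈ reachSet W k j t → i ∈ reachSet W k j (t + 1) :=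
    fun t i h => hmemsucc t i i h (hself (k + t) i)
  have hj : ∀ t, j ∈ reachSet W k j t := by
    intro t
    induction t with
    | zero => simp [reachSet]
    | succ t ih => exact hmono t j ih
  -- mass transport bound
  have hbound : ∀ t i, i ∈ reachSet W k j t → w ^ t * π (k + t) i ≤ π k j := by
    intro t
    induction t with
    | zero =>
      intro i hi
      simp only [reachSet, Finset.mem_singleton] at hi
      subst hi
      simp
    | succ t ih =>
      intro i hi
      simp only [reachSet, Finset.mem_filter, Finset.mem_univ, true_and] at hi
      obtain ⟨i', hi', hpos⟩ := hi
      have h1 : w * π (k + t + 1) i ≤ π (k + t) i' := by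
        calc w * π (k + t + 1) i ≤ π (k + t + 1) i * W (k + t) i i' := by
              rw [mul_comm]
              exact mul_le_mul_of_nonneg_left (hwbound _ _ _ hpos) (hπnn _ _)
          _ ≤ ∑ a, π (k + t + 1) a * W (k + t) a i' :=
              Finset.single_le_sum (f := fun a => π (k + t + 1) a * W (k + t) a i')
                (fun a _ => mul_nonneg (hπnn _ _) (hWnn _ _ _))
                (Finset.mem_univ i)
          _ = π (k + t) i' := hbal (k + t) i'
      have h2 : w ^ t * π (k + t) i' ≤ π k j := ih i' hi'
      calc w ^ (t + 1) * π (k + (t + 1)) i = w ^ t * (w * π (k + t + 1) i) := by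
            rw [show k + (t + 1) = k + t + 1 from rfl]; ring
        _ ≤ w ^ t * π (k + t) i' := mul_le_mul_of_nonneg_left h1 (pow_nonneg hw.le t)
        _ ≤ π k j := h2
  -- reachable set grows
  have hcard : ∀ t, min (t + 1) m ≤ (reachSet W k j t).card := by
    intro t
    induction t with
    | zero =>
      simp only [reachSet, Finset.card_singleton]
      omega
    | succ t ih =>
      by_cases hu : reachSet W k j t = Finset.univ
      · have hu' : reachSet W k j (t + 1) = Finset.univ := by
          apply Finset.eq_univ_of_forall
          intro i
          exact hmono t i (hu ▸ Finset.mem_univ i)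
        rw [hu', Finset.card_univ, Fintype.card_fin]
        omega
      · obtain ⟨a, ha⟩ : ∃ a, a ∉ reachSet W k j t := by
          by_contra h
          push_neg at h
          exact hu (Finset.eq_univ_of_forall h)
        obtain ⟨x, hx, y, hy, hxy⟩ :=
          cross_lemma (S := {z | z ∈ reachSet W k j t}) (hconn (k + t) j a) (hj t) ha
        have hyS : y ∈ reachSet W k j (t + 1) := hmemsucc t y x hx hxy
        have hsub : insert y (reachSet W k j t) ⊆ reachSet W k j (t + 1) := by
          intro z hz
          rcases Finset.mem_insert.mp hz with h | h
          · subst h; exact hyS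
          · exact hmono t z h
        have hc : (reachSet W k j t).card + 1 ≤ (reachSet W k j (t + 1)).card := by
          have hle := Finset.card_le_card hsub
          rwa [Finset.card_insert_of_notMem hy] at hle
        omega
  have huniv : reachSet W k j m = Finset.univ := by
    apply Finset.eq_univ_of_card
    have h1 := hcard m
    have h2 := Finset.card_le_univ (reachSet W k j m)
    rw [Fintype.card_fin] at h2 ⊢
    omega
  -- some node has mass at least 1/m at time k + m
  have hne : (Finset.univ : Finset (Fin m)).Nonempty := ⟨⟨0, hm⟩, Finset.mem_univ _⟩
  obtain ⟨i, -, hi⟩ : ∃ i ∈ Finset.univ, (1 : ℝ) / m ≤ π (k + m) i := by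
    apply Finset.exists_le_of_sum_le hne
    rw [hπsum]
    rw [Finset.sum_const, Finset.card_univ, Fintype.card_fin, nsmul_eq_mul]
    rw [mul_one_div, div_self (by exact_mod_cast hm.ne')]
  have hb := hbound m i (huniv ▸ Finset.mem_univ i)
  calc w ^ m / m = w ^ m * (1 / m) := by ring
    _ ≤ w ^ m * π (k + m) i := mul_le_mul_of_nonneg_left hi (pow_nonneg hw.le m)
    _ ≤ π k j := hb
end

section
/- Let $M$ be the $3\times 3$ nonnegative matrix $M(\alpha,\beta)$ with entries $M_{11} = (1+\bar\alpha L)c$, $M_{12} = \bar\alpha L$, $M_{13} = \bar\beta$, $M_{21} = \sqrt{2}\bar\alpha L c$, $M_{22} = 1 - \eta\bar\alpha$, $M_{23} = \bar\beta$, $M_{31} = \varphi(1+\bar\alpha L)c$, $M_{32} = \varphi \bar\alpha L$, $M_{33} = \bar\beta$, where $c \in (0,1)$, $\varphi \ge 1$, $L > 0$, $\eta > 0$, $\bar\alpha > 0$, $\bar\beta \ge 0$. If all three diagonal entries of $M$ are strictly less than 1 and $\det(\mathbb{I} - M) > 0$, and $M$ is nonnegative, then the spectral radius of $M$ is strictly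 less than 1. -/
/-!
Write `A = 1 - M`. Because the off-diagonal entries of `A` are nonpositive, every off-diagonal
cofactor of the 3 × 3 matrix `A` is nonnegative; expanding `det A` along row `k` then gives
`0 < det A ≤ A k k * adj A k k`, so the diagonal cofactors are positive too. Hence
`v = adj A *ᵥ 1` is a positive vector with `M v = v - det A • 1 < v`. A nonnegative matrix that
strictly shrinks a positive vector has all its eigenvalues in the open unit disc: for an
eigenvector `x`, at an index `i` maximising `‖x j‖ / v j` the triangle inequality gives
`‖μ‖ ‖x i‖ < ‖x i‖`.
-/

open Matrix Finset

namespace Matrix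

variable {n K R : Type*} [Fintype n] [DecidableEq n]

theorem exists_mulVec_eq_smul_of_mem_spectrum [Field K] {A : Matrix n n K} {μ : K}
    (hμ : μ ∈ spectrum K A) : ∃ x ≠ 0, A *ᵥ x = μ • x := by
  rw [← spectrum_toLin', ← Module.End.hasEigenvalue_iff_mem_spectrum] at hμ
  obtain ⟨x, hx⟩ := hμ.exists_hasEigenvector
  exact ⟨x, hx.2, by simpa [toLin'_apply] using hx.apply_eq_smul⟩

theorem norm_lt_one_of_mem_spectrum_of_mulVec_lt {M : Matrix n n ℝ} (hM : ∀ i j, 0 ≤ M i j)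
    {v : n → ℝ} (hv : ∀ i, 0 < v i) (hMv : ∀ i, (M *ᵥ v) i < v i) {μ : ℂ}
    (hμ : μ ∈ spectrum ℂ (M.map ((↑) : ℝ → ℂ))) : ‖μ‖ < 1 := by
  obtain ⟨x, hx0, hx⟩ := exists_mulVec_eq_smul_of_mem_spectrum hμ
  obtain ⟨j, hj⟩ := Function.ne_iff.mp hx0
  obtain ⟨i, -, hi⟩ := exists_max_image univ (fun j ↦ ‖x j‖ / v j) ⟨j, mem_univ j⟩
  set t := ‖x i‖ / v i
  have hxt (j : n) : ‖x j‖ ≤ t * v j := (div_le_iff₀ (hv j)).mp (hi j (mem_univ j))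
  have ht : 0 < t := (div_pos (norm_pos_iff.mpr hj) (hv j)).trans_le (hi j (mem_univ j))
  have hxi : 0 < ‖x i‖ := (div_pos_iff_of_pos_right (hv i)).mp ht
  refine lt_of_mul_lt_mul_right (a := ‖x i‖) ?_ hxi.le
  calc ‖μ‖ * ‖x i‖ = ‖∑ j, (M i j : ℂ) * x j‖ := by
        rw [← norm_mul, ← smul_eq_mul, ← Pi.smul_apply, ← hx]; rfl
    _ ≤ ∑ j, M i j * ‖x j‖ := by
        refine (norm_sum_le _ _).trans_eq (sum_congr rfl fun j _ ↦ ?_)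
        rw [norm_mul, Complex.norm_real, Real.norm_of_nonneg (hM i j)]
    _ ≤ ∑ j, M i j * (t * v j) := by gcongr with j; exacts [hM i j, hxt j]
    _ = t * (M *ᵥ v) i := by
        simp only [mulVec, dotProduct, mul_sum]
        exact sum_congr rfl fun j _ ↦ by ring
    _ < t * v i := mul_lt_mul_of_pos_left (hMv i) ht
    _ = 1 * ‖x i‖ := by simp [t, div_mul_cancel₀ _ (hv i).ne']

theorem adjugate_fin_three_nonneg_of_offDiag_nonpos [CommRing R] [LinearOrder R]
    [IsStrictOrderedRing R] {A : Matrix (Fin 3) (Fin 3) R} (hdiag : ∀ i, 0 ≤ A i i)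
    (hoff : ∀ i j, i ≠ j → A i j ≤ 0) {i j : Fin 3} (hij : i ≠ j) : 0 ≤ A.adjugate i j := by
  fin_cases i <;> fin_cases j <;> simp [adjugate_fin_three] at hij ⊢ <;>
    nlinarith [hdiag 0, hdiag 1, hdiag 2, hoff 0 1 (by decide), hoff 0 2 (by decide),
      hoff 1 0 (by decide), hoff 1 2 (by decide), hoff 2 0 (by decide), hoff 2 1 (by decide)]

theorem det_le_mul_adjugate_apply_self [CommRing R] [LinearOrder R] [IsStrictOrderedRing R]
    {A : Matrix n n R} (hoff : ∀ i j, i ≠ j → A i j ≤ 0)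
    (hadj : ∀ i j, i ≠ j → 0 ≤ A.adjugate i j) (k : n) : A.det ≤ A k k * A.adjugate k k := by
  have hdet : A.det = ∑ j, A k j * A.adjugate j k := by
    simpa [mul_apply] using (congr_fun (congr_fun (mul_adjugate A) k) k).symm
  rw [hdet, ← add_sum_erase _ _ (mem_univ k), add_le_iff_nonpos_right]
  refine sum_nonpos fun j hj ↦ ?_
  have hjk : j ≠ k := ne_of_mem_erase hj
  exact mul_nonpos_of_nonpos_of_nonneg (hoff k j hjk.symm) (hadj j k hjk)

theorem exists_pos_mulVec_lt_self_of_fin_three [CommRing R] [LinearOrder R]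
    [IsStrictOrderedRing R] {M : Matrix (Fin 3) (Fin 3) R} (hM : ∀ i j, 0 ≤ M i j)
    (hdiag : ∀ i, M i i < 1) (hdet : 0 < (1 - M).det) :
    ∃ v : Fin 3 → R, (∀ i, 0 < v i) ∧ ∀ i, (M *ᵥ v) i < v i := by
  set A := 1 - M
  have hAdiag (i : Fin 3) : 0 < A i i := by simpa [A] using hdiag i
  have hAoff (i j : Fin 3) (hij : i ≠ j) : A i j ≤ 0 := by simpa [A, one_apply_ne hij] using hM i j
  have hadj (i j : Fin 3) (hij : i ≠ j) : 0 ≤ A.adjugate i j :=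
    adjugate_fin_three_nonneg_of_offDiag_nonpos (fun i ↦ (hAdiag i).le) hAoff hij
  have hadj_diag (i : Fin 3) : 0 < A.adjugate i i :=
    pos_of_mul_pos_right (hdet.trans_le (det_le_mul_adjugate_apply_self hAoff hadj i)) (hAdiag i).le
  have hAv : A *ᵥ (A.adjugate *ᵥ 1) = A.det • 1 := by
    rw [mulVec_mulVec, mul_adjugate, smul_mulVec, one_mulVec]
  refine ⟨A.adjugate *ᵥ 1, fun i ↦ ?_, fun i ↦ ?_⟩
  · simp only [mulVec_one]
    refine sum_pos' (fun j _ ↦ ?_) ⟨i, mem_univ i, hadj_diag i⟩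
    rcases eq_or_ne i j with rfl | hij
    exacts [(hadj_diag i).le, hadj i j hij]
  · have hMA : M = 1 - A := by simp [A]
    rw [hMA, sub_mulVec, one_mulVec, hAv]
    simpa using hdet

end Matrix

theorem stmt_12_general (M : Matrix (Fin 3) (Fin 3) ℝ)
    (hMnn : ∀ i j, 0 ≤ M i j)
    (hdiag : ∀ i, M i i < 1)
    (hdet : 0 < (1 - M).det) :
    ∀ μ : ℂ, μ ∈ spectrum ℂ (M.map (Complex.ofReal : ℝ → ℂ)) → ‖μ‖ < 1 := by
  obtain ⟨v, hv, hMv⟩ := exists_pos_mulVec_lt_self_of_fin_three hMnn hdiag hdet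
  exact fun μ ↦ norm_lt_one_of_mem_spectrum_of_mulVec_lt hMnn hv hMv

theorem stmt_12 (c φ L η αbar βbar : ℝ)
    (hc0 : 0 < c) (hc1 : c < 1) (hφ : 1 ≤ φ) (hL : 0 < L) (hη : 0 < η)
    (hα : 0 < αbar) (hβ : 0 ≤ βbar)
    (M : Matrix (Fin 3) (Fin 3) ℝ)
    (hM : M = !![(1 + αbar * L) * c, αbar * L, βbar;
                 Real.sqrt 2 * αbar * L * c, 1 - η * αbar, βbar;
                 φ * (1 + αbar * L) * c, φ * (αbar * L), βbar])
    (hMnn : ∀ i j, 0 ≤ M i j)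
    (hdiag : ∀ i, M i i < 1)
    (hdet : 0 < (1 - M).det) :
    ∀ μ : ℂ, μ ∈ spectrum ℂ (M.map (Complex.ofReal : ℝ → ℂ)) → ‖μ‖ < 1 :=
  stmt_12_general M hMnn hdiag hdet
end

section
/- Let $W$ be an $m\times m$ row-stochastic matrix compatible with a strongly connected directed graph $\mathbb{G}$ with positive diagonal entries, let $\phi, \pi$ be stochastic vectors with $\phi^{\mathsf{T}} W = \pi^{\mathsf{T}}$ and $\pi > 0$, let $z_1,\dots,z_m \in \mathbb{R}^n$, $r_i = \sum_j W_{ij} z_j$, and $\hat z_\pi = \sum_i \pi_i z_i$. Then for every $u \in \mathbb{R}^n$: $\sum_{i=1}^m \phi_i \|r_i - u\|^2 \le \sum_{j=1}^m \pi_j \|z_j - u\|^2 - \frac{\min(\phi)(\min^+(W))^2}{\max^2(\pi)\, \mathsf{D}(\mathbb{G})\, \mathsf{K}(\mathbb{G})} \sum_{j=1}^m \pi_j \|z_j - \hat z_\pi\|^2$, where $\mathsf{D}(\mathbb{G})$ is the graph diameter, $\mathsf{K}(\mathbb{G})$ the maximal edge-utility, and $\min^+(W)$ the smallest positive entry of $W$.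 -/
set_option linter.unusedSectionVars false
set_option maxHeartbeats 1000000

open Finset

/-- `l` is a directed walk in the edge set `E` (consecutive elements are edges). -/
def IsWalk {m : ℕ} (E : Finset (Fin m × Fin m)) (l : List (Fin m)) : Prop :=
  l.Chain' (fun a b => (a, b) ∈ E)

/-- `l` is a directed walk from `i` to `j` in the edge set `E`. -/
def IsWalkFromTo {m : ℕ} (E : Finset (Fin m × Fin m)) (i j : Fin m)
    (l : List (Fin m)) : Prop :=
  IsWalk E l ∧ l.head? = some i ∧ l.getLast? = some j

/-- Graph distance: the number of edges of a shortest directed walk from `i` to `j`. -/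
noncomputable def gdist {m : ℕ} (E : Finset (Fin m × Fin m)) (i j : Fin m) : ℕ :=
  sInf {k | ∃ l, IsWalkFromTo E i j l ∧ l.length = k + 1}

/-- Diameter `𝖣(𝔾)`: the longest among shortest directed path lengths between node pairs. -/
noncomputable def gdiam {m : ℕ} (E : Finset (Fin m × Fin m)) : ℕ :=
  sSup {k | ∃ i j, gdist E i j = k}

/-- The number of ordered node pairs whose chosen shortest path (in the system `P`)
uses the edge `e`. -/
def edgeCount {m : ℕ} (P : Fin m → Fin m → List (Fin m)) (e : Fin m × Fin m) : ℕ :=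
  ((Finset.univ ×ˢ Finset.univ).filter (fun p : Fin m × Fin m =>
    e ∈ (P p.1 p.2).zip (P p.1 p.2).tail)).card

/-- Maximal edge-utility `𝖪(𝔾)` with respect to the shortest-path system `P`. -/
def edgeUtil {m : ℕ} (E : Finset (Fin m × Fin m)) (P : Fin m → Fin m → List (Fin m)) : ℕ :=
  E.sup (edgeCount P)

/-- `min⁺(W)`: the smallest positive entry of `W`. -/
noncomputable def minPlus {m : ℕ} (W : Matrix (Fin m) (Fin m) ℝ) : ℝ :=
  sInf {x : ℝ | 0 < x ∧ ∃ i j, W i j = x}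

section helpers
variable {α : Type*} {F : Type*} [NormedAddCommGroup F] [InnerProductSpace ℝ F]

lemma tele_sum (f : α → F) :
    ∀ (l : List α) (i j : α), l.head? = some i → l.getLast? = some j →
      ((l.zip l.tail).map (fun p => f p.1 - f p.2)).sum = f i - f j := by
  intro l
  induction l with
  | nil => intro i j h; simp at h
  | cons a t ih =>
    intro i j hh hl
    simp at hh
    subst hh
    cases t with
    | nil =>
      simp at hl; subst hl; simp
    | cons b t' =>
      have hl' : (b :: t').getLast? = some j := by
        rw [List.getLast?_cons_cons] at hl; exact hl
      have := ih b j rfl hl'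
      simp only [List.zip_cons_cons, List.tail_cons, List.map_cons, List.sum_cons] at *
      rw [this]
      abel

lemma chain_pairs {R : α → α → Prop} :
    ∀ {l : List α}, l.Chain' R → ∀ p ∈ l.zip l.tail, R p.1 p.2 := by
  intro l
  induction l with
  | nil => intro _ p hp; simp at hp
  | cons a t ih =>
    intro h p hp
    cases t with
    | nil => simp at hp
    | cons b t' =>
      simp only [List.Chain', List.isChain_cons_cons] at h
      simp only [List.zip_cons_cons, List.tail_cons, List.mem_cons] at hp
      rcases hp with rfl | hp
      · exact h.1
      · exact ih h.2 p hp

lemma map_fst_zip_tail : ∀ (l : List α), (l.zip l.tail).map Prod.fst = l.dropLast := by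
  intro l
  induction l with
  | nil => simp
  | cons a t ih =>
    cases t with
    | nil => simp
    | cons b t' =>
      simp only [List.zip_cons_cons, List.tail_cons, List.map_cons] at *
      rw [ih]
      simp

lemma zip_tail_nodup {l : List α} (h : l.Nodup) : (l.zip l.tail).Nodup := by
  have h1 : ((l.zip l.tail).map Prod.fst).Nodup := by
    rw [map_fst_zip_tail]
    exact h.sublist (List.dropLast_sublist l)
  exact h1.of_map _

lemma dup_decomp' : ∀ {l : List α} (v : α), List.Sublist [v, v] l →
    ∃ a b c, l = a ++ v :: b ++ v :: c := by
  intro l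
  induction l with
  | nil => intro v h; simp at h
  | cons x t ih =>
    intro v h
    rw [List.cons_sublist_cons'] at h
    rcases h with h | ⟨rfl, h⟩
    · obtain ⟨a, b, c, rfl⟩ := ih v h
      exact ⟨x :: a, b, c, rfl⟩
    · have hv : v ∈ t := by
        have := h.subset; simp at this; exact this
      obtain ⟨s, t', rfl⟩ := List.append_of_mem hv
      exact ⟨[], s, t', rfl⟩

lemma norm_sum_sq_le {ι : Type*} (s : Finset ι) (g : ι → F) :
    ‖∑ x ∈ s, g x‖ ^ 2 ≤ (s.card : ℝ) * ∑ x ∈ s, ‖g x‖ ^ 2 := by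
  calc ‖∑ x ∈ s, g x‖ ^ 2 ≤ (∑ x ∈ s, ‖g x‖) ^ 2 := by
        apply pow_le_pow_left₀ (norm_nonneg _) (norm_sum_le _ _)
    _ ≤ (s.card : ℝ) * ∑ x ∈ s, ‖g x‖ ^ 2 := sq_sum_le_card_mul_sum_sq

variable {ι : Type*}

local notation "⟪" x ", " y "⟫" => @inner ℝ _ _ x y

lemma wsum_center (s : Finset ι) (w : ι → ℝ) (hw : ∑ i ∈ s, w i = 1) (z : ι → F) :
    ∑ i ∈ s, w i • (z i - (∑ k ∈ s, w k • z k)) = 0 := by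
  simp only [smul_sub, Finset.sum_sub_distrib, ← Finset.sum_smul, hw, one_smul, sub_self]

lemma varA (s : Finset ι) (w : ι → ℝ) (hw : ∑ i ∈ s, w i = 1) (z : ι → F) (u : F) :
    ∑ i ∈ s, w i * ‖z i - u‖ ^ 2
      = ‖(∑ k ∈ s, w k • z k) - u‖ ^ 2
        + ∑ i ∈ s, w i * ‖z i - (∑ k ∈ s, w k • z k)‖ ^ 2 := by
  set r : F := ∑ k ∈ s, w k • z k with hr
  have hzero : ∑ i ∈ s, w i • (z i - r) = 0 := wsum_center s w hw z
  have hterm : ∀ i, ‖z i - u‖ ^ 2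
      = ‖z i - r‖ ^ 2 + 2 * ⟪z i - r, r - u⟫ + ‖r - u‖ ^ 2 := by
    intro i
    have : z i - u = (z i - r) + (r - u) := by abel
    rw [this, norm_add_sq_real]
  calc ∑ i ∈ s, w i * ‖z i - u‖ ^ 2
      = ∑ i ∈ s, (w i * ‖z i - r‖ ^ 2 + w i * (2 * ⟪z i - r, r - u⟫) + w i * ‖r - u‖ ^ 2) := by
        apply Finset.sum_congr rfl; intro i _; rw [hterm i]; ring
    _ = (∑ i ∈ s, w i * ‖z i - r‖ ^ 2) + 2 * ⟪∑ i ∈ s, w i • (z i - r), r - u⟫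
          + (∑ i ∈ s, w i) * ‖r - u‖ ^ 2 := by
        rw [Finset.sum_add_distrib, Finset.sum_add_distrib, ← Finset.sum_mul,
          sum_inner]
        simp only [real_inner_smul_left]
        congr 1
        congr 1
        rw [Finset.mul_sum]
        exact Finset.sum_congr rfl fun i _ => by ring
    _ = ‖r - u‖ ^ 2 + ∑ i ∈ s, w i * ‖z i - r‖ ^ 2 := by
        rw [hzero, hw]
        simp [inner_zero_left]
        ring

lemma varB (s : Finset ι) (w : ι → ℝ) (hw : ∑ i ∈ s, w i = 1) (z : ι → F) :
    ∑ i ∈ s, w i * ‖z i - (∑ k ∈ s, w k • z k)‖ ^ 2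
      = 2⁻¹ * ∑ i ∈ s, ∑ j ∈ s, w i * w j * ‖z i - z j‖ ^ 2 := by
  set r : F := ∑ k ∈ s, w k • z k with hr
  have hzero : ∑ i ∈ s, w i • (z i - r) = 0 := wsum_center s w hw z
  have hterm : ∀ i j, ‖z i - z j‖ ^ 2
      = ‖z i - r‖ ^ 2 - 2 * ⟪z i - r, z j - r⟫ + ‖z j - r‖ ^ 2 := by
    intro i j
    have : z i - z j = (z i - r) - (z j - r) := by abel
    rw [this, norm_sub_sq_real]
  have key : ∑ i ∈ s, ∑ j ∈ s, w i * w j * ‖z i - z j‖ ^ 2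
      = 2 * ∑ i ∈ s, w i * ‖z i - r‖ ^ 2 := by
    calc ∑ i ∈ s, ∑ j ∈ s, w i * w j * ‖z i - z j‖ ^ 2
        = ∑ i ∈ s, ∑ j ∈ s, (w i * ‖z i - r‖ ^ 2 * w j
            - 2 * ⟪w i • (z i - r), w j • (z j - r)⟫
            + w i * (w j * ‖z j - r‖ ^ 2)) := by
          apply Finset.sum_congr rfl; intro i _
          apply Finset.sum_congr rfl; intro j _
          rw [hterm i j, real_inner_smul_left, real_inner_smul_right]
          ring
      _ = (∑ i ∈ s, w i * ‖z i - r‖ ^ 2) * (∑ j ∈ s, w j)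
            - 2 * ⟪∑ i ∈ s, w i • (z i - r), ∑ j ∈ s, w j • (z j - r)⟫
            + (∑ i ∈ s, w i) * (∑ j ∈ s, w j * ‖z j - r‖ ^ 2) := by
          simp only [Finset.sum_add_distrib, Finset.sum_sub_distrib, ← Finset.mul_sum,
            ← Finset.sum_mul, sum_inner]
          simp only [inner_sum]
      _ = 2 * ∑ i ∈ s, w i * ‖z i - r‖ ^ 2 := by
          rw [hzero, hw]
          simp [inner_zero_left]
          ring
  rw [key]
  ring

end helpers

section walks
variable {α : Type*}

lemma shorter_walk {m : ℕ} (E : Finset (Fin m × Fin m)) (i j : Fin m)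
    {l : List (Fin m)} (hw : IsWalkFromTo E i j l) (hnd : ¬ l.Nodup) :
    ∃ l', IsWalkFromTo E i j l' ∧ l'.length < l.length := by
  rw [List.nodup_iff_sublist] at hnd
  push_neg at hnd
  obtain ⟨v, hv⟩ := hnd
  obtain ⟨a, b, c, hl⟩ := dup_decomp' v hv
  obtain ⟨hch, hhd, hlst⟩ := hw
  subst hl
  refine ⟨a ++ v :: c, ⟨?_, ?_, ?_⟩, ?_⟩
  · unfold IsWalk at hch ⊢
    simp only [List.Chain'] at hch ⊢
    rw [List.isChain_append] at hch
    obtain ⟨ha, hrest, hlink⟩ := hch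
    rw [List.isChain_append] at ha
    rw [List.isChain_append]
    exact ⟨ha.1, hrest, fun x hx y hy => ha.2.2 x hx y (by simpa using hy)⟩
  · cases a with
    | nil => simpa using hhd
    | cons x a' => simpa using hhd
  · rw [List.getLast?_append_of_ne_nil _ (by simp : (v :: c) ≠ [])] at hlst
    rw [List.getLast?_append_of_ne_nil _ (by simp : (v :: c) ≠ [])]
    exact hlst
  · simp

lemma walk_gdist_le {m : ℕ} (E : Finset (Fin m × Fin m)) (i j : Fin m)
    {l : List (Fin m)} (hw : IsWalkFromTo E i j l) :
    gdist E i j + 1 ≤ l.length := by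
  have hne : l ≠ [] := by
    intro h; subst h; simp [IsWalkFromTo] at hw
  have hlen : 1 ≤ l.length := List.length_pos_iff.mpr hne
  have : gdist E i j ≤ l.length - 1 :=
    Nat.sInf_le ⟨l, hw, by omega⟩
  omega

lemma shortest_nodup {m : ℕ} (E : Finset (Fin m × Fin m)) (i j : Fin m)
    {l : List (Fin m)} (hw : IsWalkFromTo E i j l)
    (hlen : l.length = gdist E i j + 1) : l.Nodup := by
  by_contra hnd
  obtain ⟨l', hw', hlt⟩ := shorter_walk E i j hw hnd
  have := walk_gdist_le E i j hw'
  omega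

end walks

theorem stmt_15 (m n : ℕ) [NeZero m]
    (E : Finset (Fin m × Fin m))
    -- strong connectivity of the digraph:
    (hconn : ∀ i j : Fin m, Relation.ReflTransGen (fun a b => (a, b) ∈ E) i j)
    (W : Matrix (Fin m) (Fin m) ℝ)
    (hWnn : ∀ i j, 0 ≤ W i j) (hWrow : ∀ i, ∑ j, W i j = 1)
    -- W is compatible with the graph and has positive diagonal entries:
    (hcompat : ∀ i j, 0 < W i j ↔ (j, i) ∈ E ∨ j = i)
    (hdiag : ∀ i, 0 < W i i)
    (φ π : Fin m → ℝ)
    (hφnn : ∀ i, 0 ≤ φ i) (hφsum : ∑ i, φ i = 1)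
    (hπpos : ∀ i, 0 < π i) (hπsum : ∑ i, π i = 1)
    (hbal : ∀ j, ∑ i, φ i * W i j = π j)
    -- a fixed shortest-path system for the graph:
    (P : Fin m → Fin m → List (Fin m))
    (hP : ∀ i j, IsWalkFromTo E i j (P i j) ∧ (P i j).length = gdist E i j + 1)
    (z : Fin m → EuclideanSpace ℝ (Fin n))
    (u : EuclideanSpace ℝ (Fin n)) :
    ∑ i, φ i * ‖(∑ j, W i j • z j) - u‖ ^ 2
      ≤ (∑ j, π j * ‖z j - u‖ ^ 2)
        - ((Finset.univ.inf' Finset.univ_nonempty φ) * (minPlus W) ^ 2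
              / ((Finset.univ.sup' Finset.univ_nonempty π) ^ 2
                  * (gdiam E : ℝ) * (edgeUtil E P : ℝ)))
          * ∑ j, π j * ‖z j - ∑ i, π i • z i‖ ^ 2 := by
  classical
  set A : ℝ := Finset.univ.inf' Finset.univ_nonempty φ with hA
  set M : ℝ := Finset.univ.sup' Finset.univ_nonempty π with hM
  set mp : ℝ := minPlus W with hmpdef
  set D : ℝ := (gdiam E : ℝ) with hD
  set K : ℝ := (edgeUtil E P : ℝ) with hK
  set S : ℝ := ∑ i, φ i * ∑ j, W i j * ‖z j - ∑ k, W i k • z k‖ ^ 2 with hS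
  set V : ℝ := ∑ j, π j * ‖z j - ∑ i, π i • z i‖ ^ 2 with hV
  set T : ℝ := ∑ e ∈ E.filter (fun e => e.1 ≠ e.2), ‖z e.1 - z e.2‖ ^ 2 with hT
  -- basic positivity facts
  have i0 : Fin m := ⟨0, Nat.pos_of_ne_zero (NeZero.ne m)⟩
  have hAnn : 0 ≤ A := Finset.le_inf' _ _ fun i _ => hφnn i
  have hAle : ∀ i, A ≤ φ i := fun i => Finset.inf'_le _ (Finset.mem_univ i)
  have hMge : ∀ i, π i ≤ M := fun i => Finset.le_sup' _ (Finset.mem_univ i)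
  have hMpos : 0 < M := lt_of_lt_of_le (hπpos i0) (hMge i0)
  have hmpnn : 0 ≤ mp :=
    le_csInf ⟨W i0 i0, hdiag i0, i0, i0, rfl⟩ fun x hx => hx.1.le
  have hmple : ∀ i j, 0 < W i j → mp ≤ W i j := fun i j h =>
    csInf_le ⟨0, fun x hx => hx.1.le⟩ ⟨h, i, j, rfl⟩
  have hTnn : 0 ≤ T := Finset.sum_nonneg fun e _ => by positivity
  have hSnn : 0 ≤ S := Finset.sum_nonneg fun i _ =>
    mul_nonneg (hφnn i) (Finset.sum_nonneg fun j _ =>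
      mul_nonneg (hWnn i j) (by positivity))
  have hDnn : 0 ≤ D := Nat.cast_nonneg _
  have hKnn : 0 ≤ K := Nat.cast_nonneg _
  have hcnn : 0 ≤ A * mp ^ 2 / (M ^ 2 * D * K) := by positivity
  -- Step 1 : exact decomposition
  have hstep1 : ∑ i, φ i * ‖(∑ j, W i j • z j) - u‖ ^ 2
      = (∑ j, π j * ‖z j - u‖ ^ 2) - S := by
    have hterm : ∀ i, φ i * ‖(∑ j, W i j • z j) - u‖ ^ 2
        = φ i * ∑ j, W i j * ‖z j - u‖ ^ 2
          - φ i * ∑ j, W i j * ‖z j - ∑ k, W i k • z k‖ ^ 2 := by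
      intro i
      have hv := varA Finset.univ (W i) (hWrow i) z u
      linear_combination (-(φ i)) * hv
    calc ∑ i, φ i * ‖(∑ j, W i j • z j) - u‖ ^ 2
        = ∑ i, (φ i * ∑ j, W i j * ‖z j - u‖ ^ 2
            - φ i * ∑ j, W i j * ‖z j - ∑ k, W i k • z k‖ ^ 2) :=
          Finset.sum_congr rfl fun i _ => hterm i
      _ = (∑ i, φ i * ∑ j, W i j * ‖z j - u‖ ^ 2) - S := by
          rw [Finset.sum_sub_distrib]
      _ = (∑ j, π j * ‖z j - u‖ ^ 2) - S := by
          congr 1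
          calc ∑ i, φ i * ∑ j, W i j * ‖z j - u‖ ^ 2
              = ∑ i, ∑ j, φ i * W i j * ‖z j - u‖ ^ 2 := by
                apply Finset.sum_congr rfl; intro i _
                rw [Finset.mul_sum]; exact Finset.sum_congr rfl fun j _ => by ring
            _ = ∑ j, ∑ i, φ i * W i j * ‖z j - u‖ ^ 2 := Finset.sum_comm
            _ = ∑ j, π j * ‖z j - u‖ ^ 2 := by
                apply Finset.sum_congr rfl; intro j _
                rw [← Finset.sum_mul, hbal j]
  have hfin : {k | ∃ i j : Fin m, gdist E i j = k}.Finite := by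
    have heq : {k | ∃ i j : Fin m, gdist E i j = k}
        = Set.range (fun p : Fin m × Fin m => gdist E p.1 p.2) := by
      ext k
      constructor
      · rintro ⟨i, j, h⟩; exact ⟨(i, j), h⟩
      · rintro ⟨⟨i, j⟩, h⟩; exact ⟨i, j, h⟩
    rw [heq]; exact Set.finite_range _
  have hgdiam_le : ∀ i j : Fin m, gdist E i j ≤ gdiam E := fun i j =>
    le_csSup hfin.bddAbove ⟨i, j, rfl⟩
  -- Key 1 : A * mp^2 * T ≤ S
  have hkey1 : A * mp ^ 2 * T ≤ S := by
    have hrow : ∀ i, mp ^ 2 * ∑ j ∈ Finset.univ.filter (fun j => j ≠ i ∧ (j, i) ∈ E),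
        ‖z j - z i‖ ^ 2 ≤ ∑ j, W i j * ‖z j - ∑ k, W i k • z k‖ ^ 2 := by
      intro i
      rw [varB Finset.univ (W i) (hWrow i) z]
      have hann : ∀ j k, (0:ℝ) ≤ W i j * W i k * ‖z j - z k‖ ^ 2 := fun j k =>
        mul_nonneg (mul_nonneg (hWnn i j) (hWnn i k)) (by positivity)
      have h1a : ∑ j ∈ Finset.univ.erase i, W i j * W i i * ‖z j - z i‖ ^ 2
          ≤ ∑ j ∈ Finset.univ.erase i, ∑ k, W i j * W i k * ‖z j - z k‖ ^ 2 :=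
        Finset.sum_le_sum fun j _ =>
          Finset.single_le_sum (f := fun k => W i j * W i k * ‖z j - z k‖ ^ 2)
            (fun k _ => hann j k) (Finset.mem_univ i)
      have h1b : ∑ k ∈ Finset.univ.erase i, W i i * W i k * ‖z i - z k‖ ^ 2
          ≤ ∑ k, W i i * W i k * ‖z i - z k‖ ^ 2 :=
        Finset.sum_le_sum_of_subset_of_nonneg (Finset.subset_univ _)
          fun k _ _ => hann i k
      have hsplit : ∑ j, ∑ k, W i j * W i k * ‖z j - z k‖ ^ 2
          = (∑ k, W i i * W i k * ‖z i - z k‖ ^ 2)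
            + ∑ j ∈ Finset.univ.erase i, ∑ k, W i j * W i k * ‖z j - z k‖ ^ 2 :=
        (Finset.add_sum_erase _ (fun j => ∑ k, W i j * W i k * ‖z j - z k‖ ^ 2)
          (Finset.mem_univ i)).symm
      have hsym : ∑ k ∈ Finset.univ.erase i, W i i * W i k * ‖z i - z k‖ ^ 2
          = ∑ j ∈ Finset.univ.erase i, W i j * W i i * ‖z j - z i‖ ^ 2 :=
        Finset.sum_congr rfl fun j _ => by rw [norm_sub_rev]; ring
      have h2 : ∑ j ∈ Finset.univ.erase i, W i j * W i i * ‖z j - z i‖ ^ 2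
          ≤ 2⁻¹ * ∑ j, ∑ k, W i j * W i k * ‖z j - z k‖ ^ 2 := by
        rw [hsplit]
        rw [hsym] at h1b
        linarith
      have h3 : mp ^ 2 * ∑ j ∈ Finset.univ.filter (fun j => j ≠ i ∧ (j, i) ∈ E),
          ‖z j - z i‖ ^ 2 ≤ ∑ j ∈ Finset.univ.erase i, W i j * W i i * ‖z j - z i‖ ^ 2 := by
        rw [Finset.mul_sum]
        calc ∑ j ∈ Finset.univ.filter (fun j => j ≠ i ∧ (j, i) ∈ E), mp ^ 2 * ‖z j - z i‖ ^ 2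
            ≤ ∑ j ∈ Finset.univ.filter (fun j => j ≠ i ∧ (j, i) ∈ E),
                W i j * W i i * ‖z j - z i‖ ^ 2 := by
              apply Finset.sum_le_sum
              intro j hj
              obtain ⟨hjne, hjE⟩ := Finset.mem_filter.mp hj |>.2
              have hWij : 0 < W i j := (hcompat i j).mpr (Or.inl hjE)
              have hmm : mp * mp ≤ W i j * W i i :=
                mul_le_mul (hmple _ _ hWij) (hmple _ _ (hdiag i)) hmpnn (hWnn i j)
              rw [sq]
              exact mul_le_mul_of_nonneg_right hmm (by positivity)
          _ ≤ ∑ j ∈ Finset.univ.erase i, W i j * W i i * ‖z j - z i‖ ^ 2 := by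
              apply Finset.sum_le_sum_of_subset_of_nonneg
              · intro j hj
                exact Finset.mem_erase.mpr
                  ⟨(Finset.mem_filter.mp hj).2.1, Finset.mem_univ j⟩
              · intro j _ _
                exact mul_nonneg (mul_nonneg (hWnn i j) (hWnn i i)) (by positivity)
      linarith
    have hTre : ∑ i, ∑ j ∈ Finset.univ.filter (fun j => j ≠ i ∧ (j, i) ∈ E),
        ‖z j - z i‖ ^ 2 = T := by
      have e1 : E.filter (fun e : Fin m × Fin m => e.1 ≠ e.2)
          = Finset.univ.filter (fun e : Fin m × Fin m => e.1 ≠ e.2 ∧ e ∈ E) := by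
        ext e; simp [and_comm]
      rw [hT, e1, Finset.sum_filter, Fintype.sum_prod_type]
      simp_rw [Finset.sum_filter]
      exact Finset.sum_comm
    calc A * mp ^ 2 * T
        = ∑ i, A * (mp ^ 2 * ∑ j ∈ Finset.univ.filter (fun j => j ≠ i ∧ (j, i) ∈ E),
            ‖z j - z i‖ ^ 2) := by
          rw [← hTre, Finset.mul_sum]
          apply Finset.sum_congr rfl; intro i _; ring
      _ ≤ S := by
          rw [hS]
          apply Finset.sum_le_sum
          intro i _
          have hnn : (0:ℝ) ≤ mp ^ 2 * ∑ j ∈ Finset.univ.filter (fun j => j ≠ i ∧ (j, i) ∈ E),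
              ‖z j - z i‖ ^ 2 := by positivity
          calc A * (mp ^ 2 * ∑ j ∈ Finset.univ.filter (fun j => j ≠ i ∧ (j, i) ∈ E),
              ‖z j - z i‖ ^ 2)
              ≤ φ i * (mp ^ 2 * ∑ j ∈ Finset.univ.filter (fun j => j ≠ i ∧ (j, i) ∈ E),
                ‖z j - z i‖ ^ 2) := mul_le_mul_of_nonneg_right (hAle i) hnn
            _ ≤ φ i * ∑ j, W i j * ‖z j - ∑ k, W i k • z k‖ ^ 2 :=
                mul_le_mul_of_nonneg_left (hrow i) (hφnn i)
  -- Key 2 : V ≤ 2⁻¹ * (M^2 * D * K) * T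
  have hkey2 : V ≤ 2⁻¹ * (M ^ 2 * D * K) * T := by
    have hpair : ∀ jj kk : Fin m, ‖z jj - z kk‖ ^ 2
        ≤ D * ∑ e ∈ ((P jj kk).zip (P jj kk).tail).toFinset, ‖z e.1 - z e.2‖ ^ 2 := by
      intro jj kk
      obtain ⟨hw, hlen⟩ := hP jj kk
      have hnd : (P jj kk).Nodup := shortest_nodup E jj kk hw hlen
      have hndz : ((P jj kk).zip (P jj kk).tail).Nodup := zip_tail_nodup hnd
      have htel : z jj - z kk
          = ∑ e ∈ ((P jj kk).zip (P jj kk).tail).toFinset, (z e.1 - z e.2) := by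
        rw [List.sum_toFinset _ hndz]
        exact (tele_sum z (P jj kk) jj kk hw.2.1 hw.2.2).symm
      rw [htel]
      calc ‖∑ e ∈ ((P jj kk).zip (P jj kk).tail).toFinset, (z e.1 - z e.2)‖ ^ 2
          ≤ ((((P jj kk).zip (P jj kk).tail).toFinset.card : ℝ))
              * ∑ e ∈ ((P jj kk).zip (P jj kk).tail).toFinset, ‖z e.1 - z e.2‖ ^ 2 :=
            norm_sum_sq_le _ _
        _ ≤ D * ∑ e ∈ ((P jj kk).zip (P jj kk).tail).toFinset, ‖z e.1 - z e.2‖ ^ 2 := by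
            apply mul_le_mul_of_nonneg_right _
              (Finset.sum_nonneg fun e _ => by positivity)
            have h1 : ((P jj kk).zip (P jj kk).tail).toFinset.card
                ≤ ((P jj kk).zip (P jj kk).tail).length := List.toFinset_card_le _
            have h2 : ((P jj kk).zip (P jj kk).tail).length = gdist E jj kk := by
              rw [List.length_zip, List.length_tail, hlen]; omega
            have h3 : gdist E jj kk ≤ gdiam E := hgdiam_le jj kk
            have h4 : ((P jj kk).zip (P jj kk).tail).toFinset.card ≤ gdiam E := by omega
            rw [hD]
            exact_mod_cast h4
    have hVb : V = 2⁻¹ * ∑ j, ∑ k, π j * π k * ‖z j - z k‖ ^ 2 := by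
      rw [hV]; exact varB Finset.univ π hπsum z
    have hstep : ∑ j, ∑ k, π j * π k * ‖z j - z k‖ ^ 2
        ≤ M ^ 2 * D * ∑ j, ∑ k, ∑ e ∈ ((P j k).zip (P j k).tail).toFinset,
            ‖z e.1 - z e.2‖ ^ 2 := by
      rw [Finset.mul_sum]
      apply Finset.sum_le_sum; intro j _
      rw [Finset.mul_sum]
      apply Finset.sum_le_sum; intro k _
      calc π j * π k * ‖z j - z k‖ ^ 2 ≤ M ^ 2 * ‖z j - z k‖ ^ 2 := by
            apply mul_le_mul_of_nonneg_right _ (by positivity)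
            rw [sq]
            exact mul_le_mul (hMge j) (hMge k) (hπpos k).le
              (le_trans (hπpos j).le (hMge j))
        _ ≤ M ^ 2 * (D * ∑ e ∈ ((P j k).zip (P j k).tail).toFinset, ‖z e.1 - z e.2‖ ^ 2) :=
            mul_le_mul_of_nonneg_left (hpair j k) (by positivity)
        _ = M ^ 2 * D * ∑ e ∈ ((P j k).zip (P j k).tail).toFinset, ‖z e.1 - z e.2‖ ^ 2 := by
            ring
    have hcount : ∑ j, ∑ k, ∑ e ∈ ((P j k).zip (P j k).tail).toFinset,
        ‖z e.1 - z e.2‖ ^ 2 ≤ K * T := by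
      have hconv : ∀ j k : Fin m, ∑ e ∈ ((P j k).zip (P j k).tail).toFinset,
          ‖z e.1 - z e.2‖ ^ 2
          = ∑ e : Fin m × Fin m,
              if e ∈ (P j k).zip (P j k).tail then ‖z e.1 - z e.2‖ ^ 2 else 0 := by
        intro j k
        rw [← Finset.sum_filter]
        apply Finset.sum_congr _ fun _ _ => rfl
        ext e; simp [List.mem_toFinset]
      have hcnt : ∀ e : Fin m × Fin m,
          (∑ j, ∑ k, if e ∈ (P j k).zip (P j k).tail then ‖z e.1 - z e.2‖ ^ 2 else 0)
          = (edgeCount P e : ℝ) * ‖z e.1 - z e.2‖ ^ 2 := by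
        intro e
        have hcard : (edgeCount P e : ℝ)
            = ∑ p ∈ Finset.univ ×ˢ Finset.univ,
                (if e ∈ (P p.1 p.2).zip (P p.1 p.2).tail then (1:ℝ) else 0) := by
          rw [edgeCount, Finset.card_filter]
          push_cast
          rfl
        rw [hcard, Finset.sum_mul, Finset.sum_product]
        apply Finset.sum_congr rfl; intro j _
        apply Finset.sum_congr rfl; intro k _
        by_cases h : e ∈ (P j k).zip (P j k).tail <;> simp [h]
      have hswap : ∑ j, ∑ k, ∑ e ∈ ((P j k).zip (P j k).tail).toFinset,
          ‖z e.1 - z e.2‖ ^ 2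
          = ∑ e : Fin m × Fin m, (edgeCount P e : ℝ) * ‖z e.1 - z e.2‖ ^ 2 := by
        simp_rw [hconv]
        calc (∑ j, ∑ k, ∑ e : Fin m × Fin m,
            if e ∈ (P j k).zip (P j k).tail then ‖z e.1 - z e.2‖ ^ 2 else 0)
            = ∑ j, ∑ e : Fin m × Fin m, ∑ k,
              if e ∈ (P j k).zip (P j k).tail then ‖z e.1 - z e.2‖ ^ 2 else 0 :=
              Finset.sum_congr rfl fun j _ => Finset.sum_comm
          _ = ∑ e : Fin m × Fin m, ∑ j, ∑ k,
              if e ∈ (P j k).zip (P j k).tail then ‖z e.1 - z e.2‖ ^ 2 else 0 :=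
              Finset.sum_comm
          _ = ∑ e : Fin m × Fin m, (edgeCount P e : ℝ) * ‖z e.1 - z e.2‖ ^ 2 :=
              Finset.sum_congr rfl fun e _ => hcnt e
      rw [hswap]
      have hle : ∀ e : Fin m × Fin m, (edgeCount P e : ℝ) * ‖z e.1 - z e.2‖ ^ 2
          ≤ K * (if e ∈ E.filter (fun e : Fin m × Fin m => e.1 ≠ e.2)
              then ‖z e.1 - z e.2‖ ^ 2 else 0) := by
        intro e
        by_cases h1 : e ∈ E
        · by_cases h2 : e.1 = e.2
          · have hz : ‖z e.1 - z e.2‖ ^ 2 = 0 := by rw [h2, sub_self]; simp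
            simp [hz]
          · rw [if_pos (Finset.mem_filter.mpr ⟨h1, h2⟩)]
            apply mul_le_mul_of_nonneg_right _ (by positivity)
            rw [hK]
            exact_mod_cast Finset.le_sup h1
        · have h0 : edgeCount P e = 0 := by
            rw [edgeCount, Finset.card_eq_zero]
            apply Finset.filter_eq_empty_iff.mpr
            intro p _
            intro hmem
            exact h1 (chain_pairs (hP p.1 p.2).1.1 e hmem)
          rw [h0]
          push_cast
          rw [zero_mul]
          apply mul_nonneg hKnn
          split_ifs
          · positivity
          · exact le_refl 0
      calc ∑ e : Fin m × Fin m, (edgeCount P e : ℝ) * ‖z e.1 - z e.2‖ ^ 2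
          ≤ ∑ e : Fin m × Fin m, K * (if e ∈ E.filter (fun e : Fin m × Fin m => e.1 ≠ e.2)
              then ‖z e.1 - z e.2‖ ^ 2 else 0) := Finset.sum_le_sum fun e _ => hle e
        _ = K * ∑ e : Fin m × Fin m, (if e ∈ E.filter (fun e : Fin m × Fin m => e.1 ≠ e.2)
              then ‖z e.1 - z e.2‖ ^ 2 else 0) := (Finset.mul_sum _ _ _).symm
        _ = K * T := by
            rw [hT, Finset.sum_ite_mem, Finset.univ_inter]
    rw [hVb]
    calc 2⁻¹ * ∑ j, ∑ k, π j * π k * ‖z j - z k‖ ^ 2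
        ≤ 2⁻¹ * (M ^ 2 * D * ∑ j, ∑ k, ∑ e ∈ ((P j k).zip (P j k).tail).toFinset,
            ‖z e.1 - z e.2‖ ^ 2) := by
          apply mul_le_mul_of_nonneg_left hstep (by norm_num)
      _ ≤ 2⁻¹ * (M ^ 2 * D * (K * T)) := by
          apply mul_le_mul_of_nonneg_left _ (by norm_num)
          apply mul_le_mul_of_nonneg_left hcount (by positivity)
      _ = 2⁻¹ * (M ^ 2 * D * K) * T := by ring
  -- assemble
  rw [hstep1]
  apply sub_le_sub_left
  -- goal : A * mp ^ 2 / (M ^ 2 * D * K) * V ≤ S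
  by_cases hm : m = 1
  · subst hm
    have hπ0 : π 0 = 1 := by simpa using hπsum
    have hV0 : V = 0 := by
      rw [hV, Fin.sum_univ_one, Fin.sum_univ_one, hπ0]
      simp
    rw [hV0, mul_zero]
    exact hSnn
  · have hm2 : 1 < m := by have := NeZero.ne m; omega
    set j0 : Fin m := ⟨0, by omega⟩ with hj0
    set j1 : Fin m := ⟨1, hm2⟩ with hj1
    have hne : j0 ≠ j1 := by
      intro h
      have := congrArg Fin.val h
      simp [hj0, hj1] at this
    have hgd_pos : gdist E j0 j1 ≠ 0 := by
      intro h0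
      obtain ⟨hw, hlen⟩ := hP j0 j1
      rw [h0] at hlen
      obtain ⟨a, ha⟩ := List.length_eq_one_iff.mp hlen
      rw [ha] at hw
      obtain ⟨_, hh, hl⟩ := hw
      simp at hh hl
      exact hne (by rw [← hh, ← hl])
    have hD1 : (1:ℝ) ≤ D := by
      have h1 : 1 ≤ gdiam E :=
        le_trans (Nat.one_le_iff_ne_zero.mpr hgd_pos) (hgdiam_le j0 j1)
      rw [hD]; exact_mod_cast h1
    have hK1 : (1:ℝ) ≤ K := by
      obtain ⟨hw01, hlen01⟩ := hP j0 j1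
      have hplne : (P j0 j1).zip (P j0 j1).tail ≠ [] := by
        have hlz : ((P j0 j1).zip (P j0 j1).tail).length = gdist E j0 j1 := by
          rw [List.length_zip, List.length_tail, hlen01]; omega
        intro h; rw [h] at hlz; simp at hlz; exact hgd_pos hlz.symm
      obtain ⟨e0, he0⟩ := List.exists_mem_of_ne_nil _ hplne
      have he0E : e0 ∈ E := chain_pairs hw01.1 e0 he0
      have hec : 1 ≤ edgeCount P e0 := by
        rw [edgeCount]
        exact Finset.card_pos.mpr ⟨(j0, j1), Finset.mem_filter.mpr ⟨by simp, he0⟩⟩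
      have h1 : 1 ≤ edgeUtil E P := le_trans hec (Finset.le_sup he0E)
      rw [hK]; exact_mod_cast h1
    have hD0 : (0:ℝ) < D := lt_of_lt_of_le one_pos hD1
    have hK0 : (0:ℝ) < K := lt_of_lt_of_le one_pos hK1
    have hdenom : (0:ℝ) < M ^ 2 * D * K :=
      mul_pos (mul_pos (pow_pos hMpos 2) hD0) hK0
    calc A * mp ^ 2 / (M ^ 2 * D * K) * V
        ≤ A * mp ^ 2 / (M ^ 2 * D * K) * (2⁻¹ * (M ^ 2 * D * K) * T) :=
          mul_le_mul_of_nonneg_left hkey2 hcnn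
      _ = A * mp ^ 2 * (2⁻¹ * T) := by
          field_simp
      _ ≤ A * mp ^ 2 * T := by
          apply mul_le_mul_of_nonneg_left _ (by positivity)
          linarith
      _ ≤ S := hkey1
end
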